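/- Let f ∈ L¹([0,1]^n), x ∈ [0,1]^n, and let {f_m} be a sequence of integrable functions such that: (a) L := lim_m f_m(x) exists; (b) for every ε > 0 there is i and R such that for all r > R and all t ∈ {−1/3,0,1/3}^n, |f_i(x) − L| < ε/2, f_i is constant on the translated cube I_r^t(x), and (1/μ(I_r^t(x))) ∫_{I_r^t(x)} |f − f_i| dμ < ε/2. Then for every t ∈ {−1/3,0,1/3}^n, lim_{r→∞} (1/μ(I_r^t(x))) ∫_{I_r^t(x)} f dμ = L. -/

import Mathlib

open MeasureTheory

/-- The translation set `{-1/3, 0, 1/3}`. -/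
def tSet : Set ℝ := {-(1 / 3), 0, 1 / 3}

/-- The translate by `t` of the open dyadic cube of precision `r` containing `x`
(when `x` avoids the translated grid). -/
noncomputable def irt (n r : ℕ) (t x : Fin n → ℝ) : Set (Fin n → ℝ) :=
  Set.univ.pi fun i =>
    Set.Ioo ((⌊(x i - t i) * 2 ^ r⌋ : ℝ) / 2 ^ r + t i)
      (((⌊(x i - t i) * 2 ^ r⌋ : ℝ) + 1) / 2 ^ r + t i)

theorem abs_setIntegral_div_sub_le {α : Type*} [MeasurableSpace α] {μ : Measure α}
    {s : Set α} (hs : MeasurableSet s) (hμ0 : μ s ≠ 0) (hμ : μ s ≠ ⊤) {f g : α → ℝ} {c : ℝ}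
    (hf : IntegrableOn f s μ) (hg : ∀ y ∈ s, g y = c) :
    |(∫ y in s, f y ∂μ) / (μ s).toReal - c| ≤ (∫ y in s, |f y - g y| ∂μ) / (μ s).toReal := by
  have hV : 0 < (μ s).toReal := ENNReal.toReal_pos hμ0 hμ
  have hg_int : ∫ y in s, g y ∂μ = (μ s).toReal * c := by
    rw [setIntegral_congr_fun hs hg, setIntegral_const, smul_eq_mul, Measure.real]
  have hg_integrable : IntegrableOn g s μ :=
    (integrableOn_const hμ).congr_fun (fun y hy => (hg y hy).symm) hs
  have hsub : (∫ y in s, f y ∂μ) / (μ s).toReal - c =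
      (∫ y in s, (f y - g y) ∂μ) / (μ s).toReal := by
    rw [integral_sub hf hg_integrable, hg_int]
    field_simp
  rw [hsub, abs_div, abs_of_pos hV]
  gcongr
  exact abs_integral_le_integral_abs

theorem volume_irt (n r : ℕ) (t x : Fin n → ℝ) :
    volume (irt n r t x) = ENNReal.ofReal ((2 ^ r)⁻¹ ^ n) := by
  have hside : ∀ a : ℝ, (a + 1) / 2 ^ r - a / 2 ^ r = (2 ^ r)⁻¹ := fun a => by ring
  simp only [irt, volume_pi_pi, Real.volume_Ioo, add_sub_add_right_eq_sub, hside,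
    Finset.prod_const, Finset.card_univ, Fintype.card_fin]
  rw [ENNReal.ofReal_pow (by positivity)]

theorem measurableSet_irt (n r : ℕ) (t x : Fin n → ℝ) : MeasurableSet (irt n r t x) :=
  MeasurableSet.univ_pi fun _ => measurableSet_Ioo

theorem stmt10_general (n : ℕ) (f : (Fin n → ℝ) → ℝ) (fm : ℕ → (Fin n → ℝ) → ℝ)
    (x : Fin n → ℝ) (L : ℝ)
    (hf : ∀ (r : ℕ) (t : Fin n → ℝ), IntegrableOn f (irt n r t x))
    (hb : ∀ ε > (0 : ℝ), ∃ i R : ℕ, ∀ r > R, ∀ t : Fin n → ℝ, (∀ i', t i' ∈ tSet) →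
      |fm i x - L| < ε / 2 ∧
      (∀ y ∈ irt n r t x, fm i y = fm i x) ∧
      (∫ y in irt n r t x, |f y - fm i y|) / (volume (irt n r t x)).toReal < ε / 2) :
    ∀ t : Fin n → ℝ, (∀ i, t i ∈ tSet) →
      Filter.Tendsto
        (fun r : ℕ => (∫ y in irt n r t x, f y) / (volume (irt n r t x)).toReal)
        Filter.atTop (nhds L) := by
  intro t ht
  refine Metric.tendsto_atTop.2 fun ε hε => ?_
  obtain ⟨i, R, hR⟩ := hb ε hε
  refine ⟨R + 1, fun r hr => ?_⟩
  obtain ⟨hLim, hConst, hAvg⟩ := hR r hr t ht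
  have hμ0 : volume (irt n r t x) ≠ 0 := by rw [volume_irt]; positivity
  have hClose := abs_setIntegral_div_sub_le (measurableSet_irt n r t x) hμ0
    (by rw [volume_irt]; exact ENNReal.ofReal_ne_top) (hf r t) hConst
  calc dist ((∫ y in irt n r t x, f y) / (volume (irt n r t x)).toReal) L
      ≤ |(∫ y in irt n r t x, f y) / (volume (irt n r t x)).toReal - fm i x| + |fm i x - L| :=
        abs_sub_le _ _ _
    _ < ε / 2 + ε / 2 := add_lt_add_of_le_of_lt (hClose.trans hAvg.le) hLim
    _ = ε := add_halves ε

/-- if `L = lim_m f_m(x)` exists and for every `ε > 0` there are `i`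
and `R` such that for all `r > R` and all `t ∈ {-1/3,0,1/3}^n`, `|f_i(x) − L| < ε/2`,
`f_i` is constant on `I_r^t(x)`, and the average of `|f − f_i|` over `I_r^t(x)` is
`< ε/2`, then for every `t ∈ {-1/3,0,1/3}^n` the averages of `f` over `I_r^t(x)`
converge to `L`. -/
theorem stmt10 (n : ℕ) (f : (Fin n → ℝ) → ℝ) (fm : ℕ → (Fin n → ℝ) → ℝ)
    (x : Fin n → ℝ) (L : ℝ)
    (hx : ∀ (r : ℕ) (t : Fin n → ℝ), (∀ i, t i ∈ tSet) → x ∈ irt n r t x)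
    (hf : ∀ (r : ℕ) (t : Fin n → ℝ), IntegrableOn f (irt n r t x))
    (hfm : ∀ (m r : ℕ) (t : Fin n → ℝ), IntegrableOn (fm m) (irt n r t x))
    (ha : Filter.Tendsto (fun m => fm m x) Filter.atTop (nhds L))
    (hb : ∀ ε > (0 : ℝ), ∃ i R : ℕ, ∀ r > R, ∀ t : Fin n → ℝ, (∀ i', t i' ∈ tSet) →
      |fm i x - L| < ε / 2 ∧
      (∀ y ∈ irt n r t x, fm i y = fm i x) ∧
      (∫ y in irt n r t x, |f y - fm i y|) / (volume (irt n r t x)).toReal < ε / 2) :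
    ∀ t : Fin n → ℝ, (∀ i, t i ∈ tSet) →
      Filter.Tendsto
        (fun r : ℕ => (∫ y in irt n r t x, f y) / (volume (irt n r t x)).toReal)
        Filter.atTop (nhds L) :=
  stmt10_general n f fm x L hf hb
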